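/- arXiv:2108.05508 — 2 statements merged into one kernel-verified Lean document; each statement's English description precedes it below -/
import Mathlib

section
/- Assume a(i,i) = 2 for all i ∈ I. Let w = w_1 ∘ ⋯ ∘ w_p, where each w_i ∈ S_n permutes only the block {c_{i−1}+1,…,c_i}. For each 1 ≤ i ≤ p, let t_{i1} < t_{i2} < ⋯ < t_{i b_i} enumerate {1 ≤ k ≤ n : μ_k = ν^i}. Then for every 1 ≤ i ≤ p and 1 ≤ j ≤ b_i: N(w∘d_μ, μ, t_{ij}) = N(d_μ, μ, t_{ij}) + 2(j−1) − 2·|J̃_{w_i}^{< d_μ(t_{ij})}|, where J̃_{w_i}^{<k} := {c_{i−1}+1 ≤ a' < k : w_i(a') < w_i(k)}. In particular, N(w∘d_μ, μ, t_{ij}) does not depend on w_r for r ≠ i. (Lemma 5.6 of the paper.) -/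
/-- `N(w,μ,t) = L(μ_t) − Σ_{j ∈ J_w^{<t}} a(μ_t, μ_j)`, where
`J_w^{<t} = {j < t : w(j) < w(t)}`. -/
def Nfun {I : Type*} (a : I → I → ℤ) (L : I → ℤ) {n : ℕ}
    (w : Equiv.Perm (Fin n)) (μ : Fin n → I) (t : Fin n) : ℤ :=
  L (μ t) - ∑ j ∈ Finset.univ.filter (fun j => j < t ∧ w j < w t), a (μ t) (μ j)

/-- Lemma 5.6 of the paper: with `d = d_μ` the stable-sorting permutation of `μ`
(characterized by `hd1`, `hd2`), `w = w_1 ∘ ⋯ ∘ w_p` with `w_i` supported on the `i`-th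
block `[c_i, c_{i+1})` (0-based), and `t` the `(j+1)`-th smallest element of
`{k : μ_k = ν^i}`, one has
`N(w∘d_μ, μ, t) = N(d_μ, μ, t) + 2j − 2|J̃_{w_i}^{< d_μ(t)}|`. -/
theorem stmt11 {I : Type*} [DecidableEq I] (a : I → I → ℤ) (L : I → ℤ)
    (ha : ∀ i, a i i = 2)
    (n p : ℕ) (nb : ℕ → I)
    (hdist : ∀ i < p, ∀ j < p, i ≠ j → nb i ≠ nb j)
    (μ : Fin n → I) (hμ : ∀ k, ∃ i < p, μ k = nb i)
    (b : ℕ → ℕ) (hb : ∀ i, b i = (Finset.univ.filter (fun k : Fin n => μ k = nb i)).card)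
    (c : ℕ → ℕ) (hc : ∀ i, c i = ∑ j ∈ Finset.range i, b j)
    (d : Equiv.Perm (Fin n))
    (hd1 : ∀ i < p, ∀ k : Fin n, μ k = nb i → c i ≤ (d k : ℕ) ∧ (d k : ℕ) < c (i + 1))
    (hd2 : ∀ k l : Fin n, k < l → μ k = μ l → d k < d l)
    (W : ℕ → Equiv.Perm (Fin n))
    (hW : ∀ j < p, ∀ k : Fin n, ((k : ℕ) < c j ∨ c (j + 1) ≤ (k : ℕ)) → W j k = k)
    (w : Equiv.Perm (Fin n)) (hw : w = ((List.range p).map W).prod)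
    (i : ℕ) (hi : i < p)
    (T : Finset (Fin n)) (hT : T = Finset.univ.filter (fun k : Fin n => μ k = nb i))
    (j : Fin T.card) (t : Fin n) (ht : t = (T.orderIsoOfFin rfl j).1) :
    Nfun a L (w * d) μ t
      = Nfun a L d μ t + 2 * ((j : ℕ) : ℤ)
        - 2 * ((Finset.univ.filter (fun a' : Fin n =>
            c i ≤ (a' : ℕ) ∧ a' < d t ∧ W i a' < W i (d t))).card : ℤ) := by
  classical
  -- monotonicity of c
  have cmono : Monotone c := by
    intro x y hxy
    simp only [hc]
    exact Finset.sum_le_sum_of_subset (Finset.range_subset_range.2 hxy)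
  have htT : t ∈ T := by rw [ht]; exact (T.orderIsoOfFin rfl j).2
  have hμt : μ t = nb i := by
    rw [hT] at htT; simpa using htT
  have hdt := hd1 i hi t hμt
  -- W r preserves the r-th block
  have hWblock : ∀ r < p, ∀ x : Fin n, c r ≤ (x : ℕ) → (x : ℕ) < c (r + 1) →
      c r ≤ (W r x : ℕ) ∧ (W r x : ℕ) < c (r + 1) := by
    intro r hr x h1 h2
    by_contra hcon
    push_neg at hcon
    have hout : ((W r x : ℕ) < c r ∨ c (r + 1) ≤ (W r x : ℕ)) := by
      rcases lt_or_ge ((W r x : ℕ)) (c r) with h | h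
      · exact Or.inl h
      · exact Or.inr (hcon h)
    have hfix := hW r hr (W r x) hout
    have hxx : W r x = x := (W r).injective hfix
    rw [hxx] at hout
    omega
  -- the product acts as W r on the r-th block
  have wprod : ∀ q ≤ p, ∀ r < p, ∀ x : Fin n, c r ≤ (x : ℕ) → (x : ℕ) < c (r + 1) →
      (((List.range q).map W).prod) x = if r < q then W r x else x := by
    intro q
    induction q with
    | zero => intro _ r _ x _ _; simp
    | succ q ih =>
      intro hq r hr x h1 h2
      rw [List.range_succ, List.map_append, List.prod_append]
      simp only [List.map_cons, List.map_nil, List.prod_cons, List.prod_nil, mul_one,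
        Equiv.Perm.mul_apply]
      by_cases hrq : r = q
      · subst hrq
        have hx' := hWblock r hr x h1 h2
        rw [ih (by omega) r hr (W r x) hx'.1 hx'.2]
        simp only [lt_irrefl, if_false, if_pos (Nat.lt_succ_self r)]
      · have hfix : W q x = x := by
          apply hW q (by omega) x
          rcases lt_or_gt_of_ne hrq with h | h
          · exact Or.inl (lt_of_lt_of_le h2 (cmono (by omega)))
          · exact Or.inr (le_trans (cmono (by omega)) h1)
        rw [hfix, ih (by omega) r hr x h1 h2]
        simp only [show (r < q + 1) ↔ (r < q) by omega]
  have hwapp : ∀ r < p, ∀ x : Fin n, c r ≤ (x : ℕ) → (x : ℕ) < c (r + 1) → w x = W r x := by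
    intro r hr x h1 h2
    rw [hw, wprod p le_rfl r hr x h1 h2, if_pos hr]
  have hfiber : ∀ k : Fin n, ∃ r < p, μ k = nb r ∧ c r ≤ (d k : ℕ) ∧ (d k : ℕ) < c (r + 1) := by
    intro k
    obtain ⟨r, hr, hμk⟩ := hμ k
    exact ⟨r, hr, hμk, hd1 r hr k hμk⟩
  have hruniq : ∀ r < p, ∀ x : ℕ, c r ≤ x → x < c (r + 1) → c i ≤ x → x < c (i + 1) → r = i := by
    intro r _ x h1 h2 h3 h4
    by_contra hne
    rcases lt_or_gt_of_ne hne with h | h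
    · have := cmono (show r + 1 ≤ i by omega); omega
    · have := cmono (show i + 1 ≤ r by omega); omega
  have hwt : (w * d) t = W i (d t) := by
    rw [Equiv.Perm.mul_apply, hwapp i hi (d t) hdt.1 hdt.2]
  -- equivalence for k in other blocks
  have hA : ∀ k : Fin n, μ k ≠ nb i → ((w * d) k < (w * d) t ↔ d k < d t) := by
    intro k hki
    obtain ⟨r, hr, hμk, hk1, hk2⟩ := hfiber k
    have hrne : r ≠ i := fun h => hki (h ▸ hμk)
    have hwk : (w * d) k = W r (d k) := by
      rw [Equiv.Perm.mul_apply, hwapp r hr (d k) hk1 hk2]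
    have hWt := hWblock i hi (d t) hdt.1 hdt.2
    have hWk := hWblock r hr (d k) hk1 hk2
    rw [hwk, hwt, Fin.lt_def, Fin.lt_def]
    rcases lt_or_gt_of_ne hrne with h | h
    · have h1 := cmono (show r + 1 ≤ i by omega)
      constructor <;> intro _ <;> omega
    · have h1 := cmono (show i + 1 ≤ r by omega)
      constructor <;> intro _ <;> omega
  -- inside the i-th block, k < t implies everything
  have hBmem : ∀ k : Fin n, μ k = nb i → k < t →
      c i ≤ (d k : ℕ) ∧ (d k : ℕ) < c (i + 1) ∧ d k < d t ∧
      ((w * d) k = W i (d k)) := by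
    intro k hki hkt
    have hdk := hd1 i hi k hki
    exact ⟨hdk.1, hdk.2, hd2 k t hkt (hki.trans hμt.symm),
      by rw [Equiv.Perm.mul_apply, hwapp i hi (d k) hdk.1 hdk.2]⟩
  -- Sum splitting
  set Swd := Finset.univ.filter (fun k : Fin n => k < t ∧ (w * d) k < (w * d) t) with hSwd
  set Sd := Finset.univ.filter (fun k : Fin n => k < t ∧ d k < d t) with hSd
  have hsplit1 := Finset.sum_filter_add_sum_filter_not Swd (fun k => μ k = nb i)
    (fun k => a (μ t) (μ k))
  have hsplit2 := Finset.sum_filter_add_sum_filter_not Sd (fun k => μ k = nb i)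
    (fun k => a (μ t) (μ k))
  -- the "other blocks" parts agree
  have hother : Swd.filter (fun k => ¬ μ k = nb i) = Sd.filter (fun k => ¬ μ k = nb i) := by
    ext k
    simp only [hSwd, hSd, Finset.mem_filter, Finset.mem_univ, true_and, and_assoc]
    constructor
    · rintro ⟨h1, h2, h3⟩; exact ⟨h1, (hA k h3).1 h2, h3⟩
    · rintro ⟨h1, h2, h3⟩; exact ⟨h1, (hA k h3).2 h2, h3⟩
  -- the i-th block part for d has cardinality j
  have hcardd : (Sd.filter (fun k => μ k = nb i)).card = (j : ℕ) := by
    have heq : Sd.filter (fun k => μ k = nb i)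
        = Finset.univ.filter (fun k : Fin n => μ k = nb i ∧ k < t) := by
      ext k
      simp only [hSd, Finset.mem_filter, Finset.mem_univ, true_and, and_assoc]
      constructor
      · rintro ⟨h1, _, h3⟩; exact ⟨h3, h1⟩
      · rintro ⟨h1, h2⟩; exact ⟨h2, (hBmem k h1 h2).2.2.1, h1⟩
    rw [heq]
    have : (Finset.univ.filter (fun j' : Fin T.card => j' < j)).card = (j : ℕ) := by
      rw [← Fin.card_Iio (b := j)]; congr 1; ext x; simp [Finset.mem_Iio]
    rw [← this]
    have hmemT : ∀ k : Fin n,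
        k ∈ Finset.univ.filter (fun k : Fin n => μ k = nb i ∧ k < t) → k ∈ T := by
      intro k hk
      simp only [Finset.mem_filter, Finset.mem_univ, true_and] at hk
      rw [hT]
      simp [hk.1]
    apply Finset.card_bij' (fun k hk => (T.orderIsoOfFin rfl).symm ⟨k, hmemT k hk⟩)
      (fun j' _ => ((T.orderIsoOfFin rfl) j').1)
    case hi =>
      intro k hk
      simp only [Finset.mem_filter, Finset.mem_univ, true_and] at hk ⊢
      rw [← (T.orderIsoOfFin rfl).lt_iff_lt, OrderIso.apply_symm_apply, ← Subtype.coe_lt_coe,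
        ← ht]
      exact hk.2
    case hj =>
      intro j' hj'
      simp only [Finset.mem_filter, Finset.mem_univ, true_and] at hj' ⊢
      have hmemμ : ∀ x ∈ T, μ x = nb i := by
        intro x hx
        rw [hT] at hx
        simpa using hx
      refine ⟨hmemμ _ ((T.orderIsoOfFin rfl) j').2, ?_⟩
      rw [ht, Subtype.coe_lt_coe]
      exact (T.orderIsoOfFin rfl).lt_iff_lt.2 hj'
    case left_inv =>
      intro k hk
      simp [OrderIso.apply_symm_apply]
    case right_inv =>
      intro j' hj'
      exact (T.orderIsoOfFin rfl).symm_apply_apply j'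
  -- the i-th block part for w*d has cardinality |J̃|
  have hcardwd : (Swd.filter (fun k => μ k = nb i)).card
      = (Finset.univ.filter (fun a' : Fin n =>
          c i ≤ (a' : ℕ) ∧ a' < d t ∧ W i a' < W i (d t))).card := by
    apply Finset.card_bij' (fun k _ => d k) (fun a' _ => d.symm a')
    · intro k hk
      simp only [hSwd, Finset.mem_filter, Finset.mem_univ, true_and, and_assoc] at hk
      obtain ⟨h1, h2, h3⟩ := hk
      obtain ⟨hb1, hb2, hb3, hb4⟩ := hBmem k h3 h1
      simp only [Finset.mem_filter, Finset.mem_univ, true_and]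
      refine ⟨hb1, hb3, ?_⟩
      rw [← hb4, ← hwt]; exact h2
    · intro a' ha'
      simp only [Finset.mem_filter, Finset.mem_univ, true_and] at ha'
      obtain ⟨h1, h2, h3⟩ := ha'
      set k := d.symm a' with hk
      have hdk : d k = a' := d.apply_symm_apply a'
      obtain ⟨r, hr, hμk, hk1, hk2⟩ := hfiber k
      rw [hdk] at hk1 hk2
      have h2' : (a' : ℕ) < (d t : ℕ) := h2
      have hri : r = i := hruniq r hr (a' : ℕ) hk1 hk2 h1 (by omega)
      rw [hri] at hμk
      have hknet : k ≠ t := by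
        intro h; rw [h] at hdk
        exact absurd hdk.symm (ne_of_lt h2)
      have hklt : k < t := by
        rcases lt_or_gt_of_ne hknet with h | h
        · exact h
        · exfalso
          have := hd2 t k h (hμt.trans hμk.symm)
          rw [hdk] at this
          exact absurd this (not_lt.2 (le_of_lt h2))
      simp only [hSwd, Finset.mem_filter, Finset.mem_univ, true_and]
      refine ⟨⟨hklt, ?_⟩, hμk⟩
      have hb4 := (hBmem k hμk hklt).2.2.2
      rw [hb4, hwt, hdk]
      exact h3
    · intro k _; exact d.symm_apply_apply k
    · intro a' _; exact d.apply_symm_apply a'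
  -- sums over the i-th block parts are twice the cardinality
  have hsum2 : ∀ s : Finset (Fin n), (∀ k ∈ s, μ k = nb i) →
      ∑ k ∈ s, a (μ t) (μ k) = 2 * (s.card : ℤ) := by
    intro s hs
    rw [Finset.sum_congr rfl (fun k hk => by rw [hs k hk, hμt, ha])]
    simp [mul_comm]
  have hfilt : ∀ s : Finset (Fin n), ∀ k ∈ s.filter (fun k => μ k = nb i), μ k = nb i := by
    intro s k hk
    exact (Finset.mem_filter.1 hk).2
  -- conclude
  simp only [Nfun]
  rw [← hsplit1, ← hsplit2, hother,
    hsum2 _ (hfilt Swd), hsum2 _ (hfilt Sd), hcardd, hcardwd]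
  ring
end

section
/- Assume a(i,i) = 2 for all i ∈ I. Define N^Λ(μ,k) := N(d_μ, μ, k) + #{1 ≤ j < k : μ_j = μ_k} for 1 ≤ k ≤ n. Then Σ_{w ∈ S(μ,ν̃)} ∏_{t=1}^{n} N(w, μ, t) = ( ∏_{i=1}^{p} b_i! ) · ∏_{t=1}^{n} N^Λ(μ,t), where S(μ,ν̃) := {w ∈ S_n : wμ = ν̃}. (This is the combinatorial identity underlying Theorem 5.5 of the paper, computing dim e(ν̃)R^Λ(β)e(μ).) -/
/-!
For `w` with `μ ∘ w⁻¹ = ν̃`, each colour class of `μ` lands in the same block of `ν̃` as under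
`d_μ`, so `w` and `d_μ` order any two differently coloured positions alike. With `a(i,i) = 2`
this gives `N(w,μ,t) = N(d_μ,μ,t) + 2 m_t - 2 s_w(t)`, where `m_t = #{j < t : μ_j = μ_t}` and
`s_w(t)` counts those `j` that `w` also keeps below `t`. The vector `(s_w(t))_t` is a Lehmer code
of `w` on the colour classes: it determines `w`, and as there are `∏ b_i! = ∏_t (m_t + 1)` such
`w`, it runs over all of `∏_t {0, …, m_t}`. The sum thus factors as
`∏_t Σ_{s ≤ m_t} (N(d_μ,μ,t) + 2 m_t - 2 s) = ∏_t (m_t + 1) (N(d_μ,μ,t) + m_t)`.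
-/

open Finset Equiv
open scoped Nat

section Fibers

variable {α I : Type*} [Fintype α] [DecidableEq α] [DecidableEq I]

theorem card_filter_comp_inv_eq (μ ν : α → I) (d : Perm α) (hd : ∀ k, ν (d k) = μ k) :
    #{w : Perm α | ∀ k, μ (w⁻¹ k) = ν k} = ∏ v ∈ univ.image μ, (#{k | μ k = v})! := by
  have hiff : ∀ w : Perm α, (∀ k, μ (w⁻¹ k) = ν k) ↔ μ ∘ ⇑(w⁻¹ * d) = μ := fun w => by
    refine ⟨fun h => funext fun k => ?_, fun h k => ?_⟩
    · change μ (w⁻¹ (d k)) = μ k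
      rw [h, hd]
    · calc μ (w⁻¹ k) = μ (d⁻¹ k) := by simpa using congrFun h (d⁻¹ k)
        _ = ν k := by simpa using (hd (d⁻¹ k)).symm
  rw [← Fintype.card_subtype,
    Fintype.card_congr (subtypeEquiv (q := fun g : Perm α => μ ∘ ⇑g = μ)
      ((Equiv.inv _).trans (Equiv.mulRight d)) hiff),
    DomMulAct.stabilizer_card']
  simp only [Fintype.card_subtype]

omit [DecidableEq α] in
theorem prod_image_factorial_card_fiber (μ : α → I) {s : Finset I} (hs : ∀ k, μ k ∈ s) :
    ∏ v ∈ univ.image μ, (#{k | μ k = v})! = ∏ v ∈ s, (#{k | μ k = v})! := by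
  refine prod_subset (image_subset_iff.2 fun k _ => hs k) fun v _ hv => ?_
  have hempty : ({k | μ k = v} : Finset α) = ∅ :=
    filter_false_of_mem fun k _ hk => hv (hk ▸ mem_image_of_mem μ (mem_univ k))
  rw [hempty, card_empty, Nat.factorial_zero]

end Fibers

section FiberCode

variable {α I : Type*} [LinearOrder α]

theorem prod_card_filter_lt_add_one (A : Finset α) :
    ∏ t ∈ A, (#{j ∈ A | j < t} + 1) = (#A)! := by
  induction A using Finset.induction_on_max with
  | empty => rfl
  | insert a s ha ih =>
    have hlt : {j ∈ insert a s | j < a} = s := by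
      ext j; simp only [mem_filter, mem_insert]
      constructor
      · rintro ⟨rfl | hj, hja⟩
        · exact absurd hja (lt_irrefl _)
        · exact hj
      · exact fun hj => ⟨Or.inr hj, ha j hj⟩
    have hs : ∀ t ∈ s, {j ∈ insert a s | j < t} = {j ∈ s | j < t} := fun t ht => by
      rw [filter_insert, if_neg (not_lt.2 (ha t ht).le)]
    have has : a ∉ s := fun h => lt_irrefl a (ha a h)
    rw [prod_insert has, hlt, prod_congr rfl fun t ht => by rw [hs t ht], ih,
      card_insert_of_notMem has, Nat.factorial_succ]

variable [Fintype α] [DecidableEq I]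

def fiberRank (μ : α → I) (t : α) : ℕ := #{j | j < t ∧ μ j = μ t}

def fiberCode (μ : α → I) (w : Perm α) (t : α) : ℕ := #{j | j < t ∧ μ j = μ t ∧ w j < w t}

theorem prod_fiberRank_add_one (μ : α → I) :
    ∏ t, (fiberRank μ t + 1) = ∏ v ∈ univ.image μ, (#{k | μ k = v})! := by
  rw [← prod_fiberwise_of_maps_to (fun t _ => mem_image_of_mem μ (mem_univ t))]
  refine prod_congr rfl fun v _ => ?_
  rw [← prod_card_filter_lt_add_one]
  refine prod_congr rfl fun t ht => ?_
  have hv : μ t = v := (mem_filter.1 ht).2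
  rw [fiberRank, filter_filter, hv]
  simp only [and_comm]

theorem fiberCode_le (μ : α → I) (w : Perm α) (t : α) : fiberCode μ w t ≤ fiberRank μ t :=
  card_le_card fun j => by simp +contextual

theorem fiberCode_eq_fiberRank (μ : α → I) {d : Perm α}
    (hd : ∀ k l, k < l → μ k = μ l → d k < d l) (t : α) : fiberCode μ d t = fiberRank μ t := by
  rw [fiberCode, fiberRank]
  congr 1
  exact filter_congr fun j _ => ⟨fun h => ⟨h.1, h.2.1⟩, fun h => ⟨h.1, h.2, hd j t h.1 h.2⟩⟩

theorem card_filter_apply_lt (μ : α → I) (w : Perm α) (v : I) (x : α) :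
    #{j | μ j = v ∧ w j < x} = #{y | μ (w⁻¹ y) = v ∧ y < x} :=
  card_nbij' w (⇑w⁻¹) (fun j hj => by simp_all) (fun j hj => by simp_all)
    (fun j _ => by simp) (fun j _ => by simp)

theorem fiberCode_lt_of_lt {μ : α → I} {w w' : Perm α} (hww' : ∀ k, μ (w⁻¹ k) = μ (w'⁻¹ k))
    {t : α} (htail : ∀ u, t < u → w u = w' u) (hlt : w t < w' t) :
    fiberCode μ w t < fiberCode μ w' t := by
  -- `w` and `w'` map the fibre of `μ t` onto the same set, so `S` and `S'` have the same size;
  -- splitting them at position `t`, `S` contains `t` itself and `S'` does not.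
  set P : Finset α := {j | t < j ∧ μ j = μ t ∧ w j < w' t}
  set S : Finset α := {j | μ j = μ t ∧ w j < w' t}
  set S' : Finset α := {j | μ j = μ t ∧ w' j < w' t}
  have hsame : #S = #S' := by
    simp only [S, S', card_filter_apply_lt, hww']
  have hw' : #S' = fiberCode μ w' t + #P := by
    rw [← card_filter_add_card_filter_not (s := S') (· < t), filter_filter, filter_filter]
    congr 2
    · exact filter_congr fun j _ => by tauto
    · refine filter_congr fun j _ => ⟨fun ⟨⟨hμ, hj⟩, hjt⟩ => ?_, fun ⟨htj, hμ, hj⟩ => ?_⟩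
      · have htj : t < j := lt_of_le_of_ne (not_lt.1 hjt) (by rintro rfl; exact lt_irrefl _ hj)
        exact ⟨htj, hμ, htail j htj ▸ hj⟩
      · exact ⟨⟨hμ, htail j htj ▸ hj⟩, not_lt.2 htj.le⟩
  have hw : fiberCode μ w t + (#P + 1) ≤ #S := by
    rw [← card_filter_add_card_filter_not (s := S) (· < t), filter_filter, filter_filter]
    refine add_le_add ?_ ?_
    · exact card_le_card fun j => by
        simp only [mem_filter, mem_univ, true_and]
        exact fun ⟨hjt, hμ, hj⟩ => ⟨⟨hμ, hj.trans hlt⟩, hjt⟩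
    · have htP : t ∉ P := by simp [P]
      rw [← card_insert_of_notMem htP]
      exact card_le_card fun j => by
        simp only [P, mem_insert, mem_filter, mem_univ, true_and]
        rintro (rfl | ⟨htj, hμ, hj⟩)
        · exact ⟨⟨rfl, hlt⟩, lt_irrefl _⟩
        · exact ⟨⟨hμ, hj⟩, not_lt.2 htj.le⟩
  omega

theorem eq_of_fiberCode_eq {μ : α → I} {w w' : Perm α} (hww' : ∀ k, μ (w⁻¹ k) = μ (w'⁻¹ k))
    (h : fiberCode μ w = fiberCode μ w') : w = w' := by
  by_contra hne
  have hD : ({t | w t ≠ w' t} : Finset α).Nonempty := by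
    obtain ⟨t, ht⟩ := not_forall.1 (mt Equiv.ext hne)
    exact ⟨t, by simpa using ht⟩
  set t := ({t | w t ≠ w' t} : Finset α).max' hD
  have hwt : w t ≠ w' t := by simpa using max'_mem _ hD
  have htail : ∀ u, t < u → w u = w' u := fun u htu => by
    by_contra hu
    exact not_le.2 htu (le_max' _ u (by simpa using hu))
  rcases lt_or_gt_of_ne hwt with hlt | hlt
  · exact (fiberCode_lt_of_lt hww' htail hlt).ne (congrFun h t)
  · exact (fiberCode_lt_of_lt (fun k => (hww' k).symm) (fun u hu => (htail u hu).symm) hlt).ne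
      (congrFun h t).symm

variable [DecidableEq α]

theorem injOn_fiberCode (μ ν : α → I) :
    Set.InjOn (fiberCode μ) ({w | ∀ k, μ (w⁻¹ k) = ν k} : Finset (Perm α)) :=
  fun w hw w' hw' h => eq_of_fiberCode_eq
    (fun k => by rw [(mem_filter.1 hw).2, (mem_filter.1 hw').2]) h

theorem image_fiberCode (μ ν : α → I) (d : Perm α) (hd : ∀ k, ν (d k) = μ k) :
    ({w | ∀ k, μ (w⁻¹ k) = ν k} : Finset (Perm α)).image (fiberCode μ)
      = Fintype.piFinset fun t => range (fiberRank μ t + 1) := by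
  refine eq_of_subset_of_card_le (image_subset_iff.2 fun w _ => ?_) ?_
  · exact Fintype.mem_piFinset.2 fun t => mem_range.2 (Nat.lt_succ_of_le (fiberCode_le μ w t))
  · rw [Fintype.card_piFinset, card_image_of_injOn (injOn_fiberCode μ ν),
      card_filter_comp_inv_eq μ ν d hd, ← prod_fiberRank_add_one]
    simp only [card_range, le_refl]

end FiberCode

theorem lt_of_lt_of_ordConnected_fiber {α β : Type*} [LinearOrder α] {ν : α → β}
    (hν : ∀ v, (ν ⁻¹' {v}).OrdConnected) {x y x' y' : α} (hx : ν x' = ν x) (hy : ν y' = ν y)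
    (hne : ν x ≠ ν y) (hxy : x < y) : x' < y' := by
  by_contra! hyx
  rcases le_or_gt y x' with hyx' | hxy'
  · exact hne ((hν (ν x)).out rfl hx ⟨hxy.le, hyx'⟩).symm
  · exact hne (hx ▸ ((hν (ν y)).out hy rfl ⟨hyx, hxy'.le⟩))

theorem ordConnected_fiber_of_blocks {I : Type*} {n p : ℕ} {nb : ℕ → I}
    (hdist : ∀ i < p, ∀ j < p, i ≠ j → nb i ≠ nb j) (c : ℕ → ℕ) {ν : Fin n → I}
    (hν : ∀ i < p, ∀ k : Fin n, c i ≤ (k : ℕ) → (k : ℕ) < c (i + 1) → ν k = nb i)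
    (hcover : ∀ k : Fin n, ∃ i < p, c i ≤ (k : ℕ) ∧ (k : ℕ) < c (i + 1)) (v : I) :
    (ν ⁻¹' {v}).OrdConnected := by
  refine ⟨fun x hx z hz y ⟨hxy, hyz⟩ => ?_⟩
  obtain ⟨i, hi, hxi, hxi'⟩ := hcover x
  obtain ⟨i', hi', hzi, hzi'⟩ := hcover z
  have hii' : i = i' := by
    by_contra hne
    exact hdist i hi i' hi' hne ((hν i hi x hxi hxi').symm.trans (hx.trans hz.symm) |>.trans
      (hν i' hi' z hzi hzi'))
  subst hii'
  have := hν i hi y (hxi.trans hxy) (lt_of_le_of_lt hyz hzi')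
  exact this.trans ((hν i hi x hxi hxi').symm.trans hx)

section Nfun

variable {I : Type*} [DecidableEq I] (a : I → I → ℤ) (L : I → ℤ) {n : ℕ}

theorem Nfun_eq_sub_fiberCode (ha : ∀ i, a i i = 2) (w : Perm (Fin n)) (μ : Fin n → I)
    (t : Fin n) :
    Nfun a L w μ t = L (μ t) - 2 * fiberCode μ w t
      - ∑ j ∈ {j | j < t ∧ μ j ≠ μ t ∧ w j < w t}, a (μ t) (μ j) := by
  rw [Nfun, ← sum_filter_add_sum_filter_not _ (fun j => μ j = μ t), filter_filter, filter_filter]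
  have hsame : ∑ j ∈ {j | (j < t ∧ w j < w t) ∧ μ j = μ t}, a (μ t) (μ j)
      = 2 * fiberCode μ w t := by
    rw [sum_congr rfl fun j hj => by rw [(mem_filter.1 hj).2.2, ha], sum_const, nsmul_eq_mul,
      mul_comm, fiberCode]
    congr 3
    exact filter_congr fun j _ => by tauto
  have hother : univ.filter (fun j => (j < t ∧ w j < w t) ∧ ¬μ j = μ t)
      = univ.filter (fun j => j < t ∧ μ j ≠ μ t ∧ w j < w t) := filter_congr fun j _ => by tauto
  rw [hsame, hother]
  ring

theorem Nfun_eq_of_lt_iff_lt (ha : ∀ i, a i i = 2) {w d : Perm (Fin n)} {μ : Fin n → I}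
    {t : Fin n} (hcross : ∀ j, μ j ≠ μ t → (w j < w t ↔ d j < d t)) :
    Nfun a L w μ t = Nfun a L d μ t + 2 * fiberCode μ d t - 2 * fiberCode μ w t := by
  rw [Nfun_eq_sub_fiberCode a L ha, Nfun_eq_sub_fiberCode a L ha,
    filter_congr fun j _ => and_congr_right fun _ => and_congr_right fun hj => hcross j hj]
  ring

end Nfun

theorem sum_range_sub_two_mul (D : ℤ) (m : ℕ) :
    ∑ k ∈ range (m + 1), (D - 2 * k) = (m + 1) * (D - m) := by
  induction m with
  | zero => simp
  | succ m ih => rw [sum_range_succ, ih]; push_cast; ring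

theorem sum_prod_Nfun_eq {I : Type*} [DecidableEq I] (a : I → I → ℤ) (L : I → ℤ)
    (ha : ∀ i, a i i = 2) {n : ℕ} (μ ν : Fin n → I) (hν : ∀ v, (ν ⁻¹' {v}).OrdConnected)
    (d : Perm (Fin n)) (hdν : ∀ k, ν (d k) = μ k)
    (hd : ∀ k l, k < l → μ k = μ l → d k < d l) :
    ∑ w ∈ {w : Perm (Fin n) | ∀ k, μ (w⁻¹ k) = ν k}, ∏ t, Nfun a L w μ t
      = ((∏ v ∈ univ.image μ, (#{k | μ k = v})! : ℕ) : ℤ)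
        * ∏ t, (Nfun a L d μ t + fiberRank μ t) := by
  set D : Fin n → ℤ := fun t => Nfun a L d μ t + 2 * fiberRank μ t
  have hN : ∀ w ∈ ({w | ∀ k, μ (w⁻¹ k) = ν k} : Finset (Perm (Fin n))), ∀ t,
      Nfun a L w μ t = D t - 2 * fiberCode μ w t := fun w hw t => by
    have hwν : ∀ k, ν (w k) = μ k := fun k => by simpa using ((mem_filter.1 hw).2 (w k)).symm
    rw [Nfun_eq_of_lt_iff_lt a L ha (d := d) fun j hj => ⟨fun h => ?_, fun h => ?_⟩,
      fiberCode_eq_fiberRank μ hd]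
    · exact lt_of_lt_of_ordConnected_fiber hν ((hdν j).trans (hwν j).symm)
        ((hdν t).trans (hwν t).symm) (by rwa [hwν, hwν]) h
    · exact lt_of_lt_of_ordConnected_fiber hν ((hwν j).trans (hdν j).symm)
        ((hwν t).trans (hdν t).symm) (by rwa [hdν, hdν]) h
  calc ∑ w ∈ {w : Perm (Fin n) | ∀ k, μ (w⁻¹ k) = ν k}, ∏ t, Nfun a L w μ t
      = ∑ w ∈ {w : Perm (Fin n) | ∀ k, μ (w⁻¹ k) = ν k}, ∏ t, (D t - 2 * fiberCode μ w t) :=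
        sum_congr rfl fun w hw => prod_congr rfl fun t _ => hN w hw t
    _ = ∑ f ∈ Fintype.piFinset fun t => range (fiberRank μ t + 1), ∏ t, (D t - 2 * f t) := by
        rw [← image_fiberCode μ ν d hdν, sum_image (injOn_fiberCode μ ν)]
        congr!
    _ = ∏ t, ∑ k ∈ range (fiberRank μ t + 1), (D t - 2 * k) :=
        (prod_univ_sum (fun t => range (fiberRank μ t + 1)) fun t k => D t - 2 * k).symm
    _ = ∏ t, ((fiberRank μ t + 1 : ℕ) * (Nfun a L d μ t + fiberRank μ t)) :=
        prod_congr rfl fun t _ => by rw [sum_range_sub_two_mul]; push_cast; ring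
    _ = _ := by rw [prod_mul_distrib, ← prod_fiberRank_add_one, Nat.cast_prod]

theorem stmt12_general {I : Type*} [DecidableEq I] (a : I → I → ℤ) (L : I → ℤ)
    (ha : ∀ i, a i i = 2)
    (n p : ℕ) (nb : ℕ → I)
    (hdist : ∀ i < p, ∀ j < p, i ≠ j → nb i ≠ nb j)
    (μ : Fin n → I) (hμ : ∀ k, ∃ i < p, μ k = nb i)
    (b : ℕ → ℕ) (hb : ∀ i, b i = (Finset.univ.filter (fun k : Fin n => μ k = nb i)).card)
    (c : ℕ → ℕ)
    (νt : Fin n → I)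
    (hνt : ∀ i < p, ∀ k : Fin n, c i ≤ (k : ℕ) → (k : ℕ) < c (i + 1) → νt k = nb i)
    (d : Equiv.Perm (Fin n))
    (hd1 : ∀ i < p, ∀ k : Fin n, μ k = nb i → c i ≤ (d k : ℕ) ∧ (d k : ℕ) < c (i + 1))
    (hd2 : ∀ k l : Fin n, k < l → μ k = μ l → d k < d l) :
    ∑ w ∈ Finset.univ.filter (fun w : Equiv.Perm (Fin n) => ∀ k, μ (w⁻¹ k) = νt k),
        ∏ t : Fin n, Nfun a L w μ t
      = (∏ i ∈ Finset.range p, ((b i).factorial : ℤ)) *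
        ∏ t : Fin n,
          (Nfun a L d μ t
            + ((Finset.univ.filter (fun j : Fin n => j < t ∧ μ j = μ t)).card : ℤ)) := by
  have hcover : ∀ x : Fin n, ∃ i < p, c i ≤ (x : ℕ) ∧ (x : ℕ) < c (i + 1) := fun x => by
    obtain ⟨i, hi, hx⟩ := hμ (d⁻¹ x)
    exact ⟨i, hi, by simpa using hd1 i hi _ hx⟩
  have hdν : ∀ k, νt (d k) = μ k := fun k => by
    obtain ⟨i, hi, hk⟩ := hμ k
    rw [hk, hνt i hi (d k) (hd1 i hi k hk).1 (hd1 i hi k hk).2]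
  have hfact : ∏ v ∈ univ.image μ, (#{k | μ k = v})! = ∏ i ∈ range p, (b i)! := by
    have hnb : Set.InjOn nb (range p) := fun i hi j hj h => by
      by_contra hij
      exact hdist i (mem_range.1 hi) j (mem_range.1 hj) hij h
    rw [prod_image_factorial_card_fiber μ (s := (range p).image nb) fun k => ?_, prod_image hnb]
    · simp only [hb]
    · obtain ⟨i, hi, hk⟩ := hμ k
      exact hk ▸ mem_image_of_mem nb (mem_range.2 hi)
  rw [sum_prod_Nfun_eq a L ha μ νt (ordConnected_fiber_of_blocks hdist c hνt hcover) d hdν hd2,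
    hfact, Nat.cast_prod]
  simp only [fiberRank, Nat.cast_factorial]

/-- Theorem 5.5 of the paper (combinatorial form): with `d = d_μ` the stable-sorting
permutation of `μ` (characterized by `hd1`, `hd2`) and `ν̃` the sorted block tuple,
`Σ_{w ∈ S(μ,ν̃)} ∏_t N(w,μ,t) = (∏_i b_i!) · ∏_t N^Λ(μ,t)`, where
`N^Λ(μ,k) = N(d_μ,μ,k) + #{j < k : μ_j = μ_k}`. -/
theorem stmt12 {I : Type*} [DecidableEq I] (a : I → I → ℤ) (L : I → ℤ)
    (ha : ∀ i, a i i = 2)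
    (n p : ℕ) (nb : ℕ → I)
    (hdist : ∀ i < p, ∀ j < p, i ≠ j → nb i ≠ nb j)
    (μ : Fin n → I) (hμ : ∀ k, ∃ i < p, μ k = nb i)
    (b : ℕ → ℕ) (hb : ∀ i, b i = (Finset.univ.filter (fun k : Fin n => μ k = nb i)).card)
    (c : ℕ → ℕ) (hc : ∀ i, c i = ∑ j ∈ Finset.range i, b j) (hcp : c p = n)
    (νt : Fin n → I)
    (hνt : ∀ i < p, ∀ k : Fin n, c i ≤ (k : ℕ) → (k : ℕ) < c (i + 1) → νt k = nb i)
    (d : Equiv.Perm (Fin n))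
    (hd1 : ∀ i < p, ∀ k : Fin n, μ k = nb i → c i ≤ (d k : ℕ) ∧ (d k : ℕ) < c (i + 1))
    (hd2 : ∀ k l : Fin n, k < l → μ k = μ l → d k < d l) :
    ∑ w ∈ Finset.univ.filter (fun w : Equiv.Perm (Fin n) => ∀ k, μ (w⁻¹ k) = νt k),
        ∏ t : Fin n, Nfun a L w μ t
      = (∏ i ∈ Finset.range p, ((b i).factorial : ℤ)) *
        ∏ t : Fin n,
          (Nfun a L d μ t
            + ((Finset.univ.filter (fun j : Fin n => j < t ∧ μ j = μ t)).card : ℤ)) :=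
  stmt12_general a L ha n p nb hdist μ hμ b hb c νt hνt d hd1 hd2
end
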